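/- Let N, M, d, K be natural numbers, H an N×M complex matrix, C an N×N positive definite complex matrix, k ∈ {1,…,K}, and W_j, W̄_j M×d complex matrices for j = 1,…,K. Define S = H W_k (H W_k)ᴴ, D = C + ∑_{j≠k} H W_j (H W_j)ᴴ, S̄ = H W̄_k (H W̄_k)ᴴ, and D̄ = C + ∑_{j≠k} H W̄_j (H W̄_j)ᴴ. Then Re Tr(I − D⁻¹ S) ≤ Re Tr(I + D̄⁻¹ S̄ D̄⁻¹ D) − 2 Re Tr(D̄⁻¹ H W̄_k W_kᴴ Hᴴ). -/

import Mathlib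

open Matrix Finset ComplexOrder

/-!
Completing the square: for positive definite `D`, `(X - D⁻¹A)ᴴ D (X - D⁻¹A)` is positive
semidefinite, so `Re Tr(Aᴴ D⁻¹ A) ≥ 2 Re Tr(Aᴴ X) - Re Tr(Xᴴ D X)` for every `X`, with equality
at `X = D⁻¹A`. Taking `A = H Wₖ` and `X = D̄⁻¹ H W̄ₖ`, the three traces of the claim are these
terms up to cyclic permutation.
-/

namespace Matrix

variable {𝕜 m n : Type*} [RCLike 𝕜] [Fintype n]

theorem re_trace_conjTranspose (A : Matrix n n 𝕜) :
    RCLike.re (trace Aᴴ) = RCLike.re (trace A) := by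
  rw [trace_conjTranspose, RCLike.star_def, RCLike.conj_re]

theorem PosSemidef.re_trace_nonneg {A : Matrix n n 𝕜} (hA : A.PosSemidef) :
    0 ≤ RCLike.re (trace A) :=
  (RCLike.nonneg_iff.mp hA.trace_nonneg).1

variable [DecidableEq n]

theorem IsHermitian.conjTranspose_mul_mul_sub_inv_mul {D : Matrix n n 𝕜} (hD : D.IsHermitian)
    (hDu : IsUnit D) (X A : Matrix n m 𝕜) :
    (X - D⁻¹ * A)ᴴ * D * (X - D⁻¹ * A) = Xᴴ * D * X - Xᴴ * A - Aᴴ * X + Aᴴ * D⁻¹ * A := by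
  have hDi : D * D⁻¹ = 1 := mul_nonsing_inv D ((isUnit_iff_isUnit_det D).mp hDu)
  have hiD : D⁻¹ * D = 1 := nonsing_inv_mul D ((isUnit_iff_isUnit_det D).mp hDu)
  rw [conjTranspose_sub, conjTranspose_mul, hD.inv.eq]
  simp only [Matrix.sub_mul, Matrix.mul_sub, Matrix.mul_assoc, ← Matrix.mul_assoc D D⁻¹, hDi, hiD,
    Matrix.one_mul]
  abel

theorem PosDef.two_mul_re_trace_sub_le [Fintype m] {D : Matrix n n 𝕜} (hD : D.PosDef)
    (X A : Matrix n m 𝕜) :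
    2 * RCLike.re (trace (Aᴴ * X)) - RCLike.re (trace (Xᴴ * D * X)) ≤
      RCLike.re (trace (Aᴴ * D⁻¹ * A)) := by
  have hsq := (hD.posSemidef.conjTranspose_mul_mul_same (X - D⁻¹ * A)).re_trace_nonneg
  have hswap : RCLike.re (trace (Xᴴ * A)) = RCLike.re (trace (Aᴴ * X)) := by
    rw [← re_trace_conjTranspose, conjTranspose_mul, conjTranspose_conjTranspose]
  rw [hD.isHermitian.conjTranspose_mul_mul_sub_inv_mul hD.isUnit] at hsq
  simp only [trace_add, trace_sub, map_add, map_sub, hswap] at hsq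
  linarith

end Matrix

/-- Quadratic convex upper bound for the MMSE mean square error (Lemma 4 of the paper):
with `S = HWₖ(HWₖ)ᴴ`, `D = C + ∑_{j≠k} HWⱼ(HWⱼ)ᴴ` and the corresponding barred quantities,
`Re Tr(I − D⁻¹S) ≤ Re Tr(I + D̄⁻¹S̄D̄⁻¹D) − 2 Re Tr(D̄⁻¹ H W̄ₖ Wₖᴴ Hᴴ)`. -/
theorem stmt_9 (N M d K : ℕ) (H : Matrix (Fin N) (Fin M) ℂ)
    (C : Matrix (Fin N) (Fin N) ℂ) (hC : C.PosDef) (k : Fin K)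
    (W Wb : Fin K → Matrix (Fin M) (Fin d) ℂ)
    (S D Sb Db : Matrix (Fin N) (Fin N) ℂ)
    (hS : S = H * W k * (H * W k)ᴴ)
    (hD : D = C + ∑ j ∈ Finset.univ.erase k, H * W j * (H * W j)ᴴ)
    (hSb : Sb = H * Wb k * (H * Wb k)ᴴ)
    (hDb : Db = C + ∑ j ∈ Finset.univ.erase k, H * Wb j * (H * Wb j)ᴴ) :
    (Matrix.trace (1 - D⁻¹ * S)).re ≤
      (Matrix.trace (1 + Db⁻¹ * Sb * Db⁻¹ * D)).re -
        2 * (Matrix.trace (Db⁻¹ * H * Wb k * (W k)ᴴ * Hᴴ)).re := by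
  have hInterfPosDef : ∀ V : Fin K → Matrix (Fin M) (Fin d) ℂ,
      (C + ∑ j ∈ Finset.univ.erase k, H * V j * (H * V j)ᴴ).PosDef := fun V =>
    hC.add_posSemidef <| posSemidef_sum _ fun j _ => posSemidef_self_mul_conjTranspose _
  have hDPosDef : D.PosDef := hD ▸ hInterfPosDef W
  have hDbH : Db⁻¹ᴴ = Db⁻¹ := (hDb ▸ hInterfPosDef Wb).isHermitian.inv.eq
  have hMSE : trace (1 - D⁻¹ * S) =
      trace (1 : Matrix (Fin N) (Fin N) ℂ) - trace ((H * W k)ᴴ * D⁻¹ * (H * W k)) := by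
    rw [hS, trace_sub, trace_mul_cycle, trace_mul_comm]
  have hQuad : trace (1 + Db⁻¹ * Sb * Db⁻¹ * D) =
      trace (1 : Matrix (Fin N) (Fin N) ℂ) +
        trace ((Db⁻¹ * (H * Wb k))ᴴ * D * (Db⁻¹ * (H * Wb k))) := by
    rw [hSb, trace_add, conjTranspose_mul Db⁻¹, hDbH, trace_mul_comm (_ * Db⁻¹ * D)]
    simp only [Matrix.mul_assoc]
  have hCross : trace (Db⁻¹ * H * Wb k * (W k)ᴴ * Hᴴ) =
      trace ((H * W k)ᴴ * (Db⁻¹ * (H * Wb k))) := by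
    rw [trace_mul_comm (H * W k)ᴴ, conjTranspose_mul H]
    simp only [Matrix.mul_assoc]
  have hTangent := hDPosDef.two_mul_re_trace_sub_le (Db⁻¹ * (H * Wb k)) (H * W k)
  simp only [hMSE, hQuad, hCross, Complex.sub_re, Complex.add_re]
  simp only [RCLike.re_to_complex] at hTangent
  linarith
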